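/- Fix μ > 0, a = b = 7/2, a positive integer K, and T ∈ ℕ with (T:ℝ) > 2/(K·a − 2). Then the consecutive blocking probabilities satisfy the two-sided strict bound λ·P_b(K,T) < P_b(K,T+1) < ((T+1)(T + K·a + 1)/(T+2)²)·λ·P_b(K,T), where λ = μ/(μ + b). -/

import Mathlib

open scoped BigOperators

/-- The distribution of the number of users in the coverage of a cluster of `K` RRUs:
`P_K(n) = b^{Ka} μ^n Γ(n + Ka) / ((μ + b)^{Ka+n} Γ(Ka) n!)` with `a = b = 7/2`. -/
noncomputable def Puser (μ : ℝ) (K : ℕ) (n : ℕ) : ℝ :=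
  (7/2 : ℝ) ^ ((K : ℝ) * (7/2)) * μ ^ n * Real.Gamma ((n : ℝ) + (K : ℝ) * (7/2)) /
    ((μ + 7/2) ^ ((K : ℝ) * (7/2) + (n : ℝ)) * Real.Gamma ((K : ℝ) * (7/2)) *
      (n.factorial : ℝ))

/-- The `n`-th summand of the user blocking probability: `((n − T)/n)·P_K(n)` for
`n ≥ T + 1`, and `0` otherwise. -/
noncomputable def blockTerm (μ : ℝ) (K T : ℕ) (n : ℕ) : ℝ :=
  if T + 1 ≤ n then (((n : ℝ) - (T : ℝ)) / (n : ℝ)) * Puser μ K n else 0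

/-- The user blocking probability `P_b(K,T) = Σ_{n=T+1}^∞ ((n − T)/n)·P_K(n)`. -/
noncomputable def Pblock (μ : ℝ) (K T : ℕ) : ℝ := ∑' n : ℕ, blockTerm μ K T n

/-!
Since `P_K(n+1) = λ (n + Ka)/(n+1) · P_K(n)`, shifting the index in `P_b(K,T+1)` gives
`P_b(K,T+1) = Σ_{m ≥ T+1} λ r(m) ((m − T)/m) P_K(m)` with `r(x) = x(x + Ka)/(x + 1)²`.
Both bounds are then termwise comparisons of `r(m)`, `m ≥ T+1`, with constants:
`r(m) > 1` as soon as `(Ka − 2) m > 1`, and `r` is strictly decreasing on `[T+1, ∞)` when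
`(Ka − 2) T > 2`, so `r(m) ≤ r(T+1) = (T+1)(T+Ka+1)/(T+2)²`, strictly for `m = T+2`.
-/

open Filter Topology

theorem hasSum_mul_lt_hasSum_mul {ι : Type*} {f c d : ι → ℝ} {a b : ℝ} (hf : ∀ i, 0 ≤ f i)
    (hcd : ∀ i, 0 < f i → c i ≤ d i) {i : ι} (hi : 0 < f i) (hci : c i < d i)
    (hc : HasSum (fun i ↦ c i * f i) a) (hd : HasSum (fun i ↦ d i * f i) b) : a < b := by
  refine hasSum_lt (f := fun j ↦ c j * f j) (g := fun j ↦ d j * f j) (fun j ↦ ?_)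
    (mul_lt_mul_of_pos_right hci hi) hc hd
  rcases (hf j).eq_or_lt with hj | hj
  · simp [← hj]
  · exact mul_le_mul_of_nonneg_right (hcd j hj) hj.le

noncomputable def growthRatio (A x : ℝ) : ℝ := x * (x + A) / (x + 1) ^ 2

theorem one_lt_growthRatio {A x : ℝ} (hx : 0 ≤ x) (h : 1 < (A - 2) * x) :
    1 < growthRatio A x := by
  rw [growthRatio, one_lt_div (by positivity)]
  nlinarith

theorem growthRatio_strictAntiOn {A t : ℝ} (ht : 0 ≤ t) (h : 2 < (A - 2) * t) :
    StrictAntiOn (growthRatio A) (Set.Ici (t + 1)) := by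
  intro x hx y hy hxy
  simp only [Set.mem_Ici] at hx hy
  have hu : 0 < A - 2 := by nlinarith
  have hux : 1 < (A - 2) * (x - 1) - 1 := by nlinarith
  have huy : 1 < (A - 2) * (y - 1) - 1 := by nlinarith
  -- with `u = A - 2` and `E` the quantity below,
  -- `u E = (u(x-1) - 1)(u(y-1) - 1) - 1 + u (u(x-1) + u(y-1) - 4)`
  have hE : 0 < (A - 2) * x * y - A - x - y := by
    refine pos_of_mul_pos_right (a := A - 2) ?_ hu.le
    nlinarith [one_lt_mul_of_lt_of_le hux huy.le]
  rw [growthRatio, growthRatio, div_lt_div_iff₀ (by nlinarith) (by nlinarith)]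
  -- the cross products differ by `(y - x) E`
  nlinarith [mul_pos (sub_pos.2 hxy) hE]

section

variable {μ : ℝ} {K : ℕ}

theorem Puser_pos (hμ : 0 < μ) (hK : 0 < K) (n : ℕ) : 0 < Puser μ K n := by
  have hA : (0 : ℝ) < K * (7/2) := by positivity
  unfold Puser
  have := Real.Gamma_pos_of_pos hA
  have := Real.Gamma_pos_of_pos (add_pos_of_nonneg_of_pos n.cast_nonneg hA)
  positivity

theorem Puser_succ (hμ : 0 < μ) (hK : 0 < K) (n : ℕ) :
    Puser μ K (n + 1) =
      μ / (μ + 7/2) * (((n : ℝ) + K * (7/2)) / ((n : ℝ) + 1)) * Puser μ K n := by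
  have hA : (0 : ℝ) < K * (7/2) := by positivity
  have hGamma : Real.Gamma (((n + 1 : ℕ) : ℝ) + K * (7/2)) =
      ((n : ℝ) + K * (7/2)) * Real.Gamma ((n : ℝ) + K * (7/2)) := by
    rw [Nat.cast_succ, add_right_comm, Real.Gamma_add_one (by positivity)]
  have hrpow : (μ + 7/2) ^ ((K : ℝ) * (7/2) + ((n + 1 : ℕ) : ℝ)) =
      (μ + 7/2) ^ ((K : ℝ) * (7/2) + n) * (μ + 7/2) := by
    rw [Nat.cast_succ, ← add_assoc, Real.rpow_add_one (by positivity)]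
  have := Real.Gamma_pos_of_pos hA
  unfold Puser
  rw [hGamma, hrpow, Nat.factorial_succ, pow_succ]
  push_cast
  field_simp

theorem summable_Puser (hμ : 0 < μ) (hK : 0 < K) : Summable (Puser μ K) := by
  have hlam_lt_one : μ / (μ + 7/2) < 1 := (div_lt_one (by positivity)).2 (by linarith)
  refine summable_of_ratio_test_tendsto_lt_one hlam_lt_one
    (.of_forall fun n ↦ (Puser_pos hμ hK n).ne') ?_
  have hratio : ∀ n : ℕ, ‖Puser μ K (n + 1)‖ / ‖Puser μ K n‖ =
      μ / (μ + 7/2) * ((K * (7/2) + 1 * n) / (1 + 1 * n)) := by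
    intro n
    rw [Real.norm_of_nonneg (Puser_pos hμ hK _).le, Real.norm_of_nonneg (Puser_pos hμ hK _).le,
      Puser_succ hμ hK, mul_div_assoc, div_self (Puser_pos hμ hK n).ne']
    ring
  simp_rw [hratio]
  simpa using (tendsto_add_mul_div_add_mul_atTop_nhds ((K : ℝ) * (7/2)) 1 1
    one_ne_zero).const_mul (μ / (μ + 7/2))

theorem le_of_blockTerm_ne_zero {T n : ℕ} (h : blockTerm μ K T n ≠ 0) : T + 1 ≤ n := by
  by_contra hn
  exact h (if_neg hn)

theorem blockTerm_pos (hμ : 0 < μ) (hK : 0 < K) {T n : ℕ} (h : T + 1 ≤ n) :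
    0 < blockTerm μ K T n := by
  have hTn : (T : ℝ) < n := by exact_mod_cast h
  rw [blockTerm, if_pos h]
  exact mul_pos (div_pos (by linarith) (by linarith [T.cast_nonneg (α := ℝ)]))
    (Puser_pos hμ hK n)

theorem blockTerm_nonneg (hμ : 0 < μ) (hK : 0 < K) (T n : ℕ) : 0 ≤ blockTerm μ K T n := by
  by_cases h : T + 1 ≤ n
  · exact (blockTerm_pos hμ hK h).le
  · exact (if_neg h).ge

theorem blockTerm_le_Puser (hμ : 0 < μ) (hK : 0 < K) (T n : ℕ) :
    blockTerm μ K T n ≤ Puser μ K n := by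
  unfold blockTerm
  split_ifs with h
  · have hn : (0 : ℝ) < n := by exact_mod_cast Nat.zero_lt_of_lt h
    refine mul_le_of_le_one_left (Puser_pos hμ hK n).le ((div_le_one hn).2 ?_)
    linarith [T.cast_nonneg (α := ℝ)]
  · exact (Puser_pos hμ hK n).le

theorem summable_blockTerm (hμ : 0 < μ) (hK : 0 < K) (T : ℕ) :
    Summable (blockTerm μ K T) :=
  .of_nonneg_of_le (blockTerm_nonneg hμ hK T) (blockTerm_le_Puser hμ hK T) (summable_Puser hμ hK)

theorem blockTerm_succ_succ (hμ : 0 < μ) (hK : 0 < K) (T m : ℕ) :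
    blockTerm μ K (T + 1) (m + 1) =
      μ / (μ + 7/2) * growthRatio (K * (7/2)) (m : ℝ) * blockTerm μ K T m := by
  unfold blockTerm
  by_cases h : T + 1 ≤ m
  · have hm : (0 : ℝ) < m := by exact_mod_cast Nat.zero_lt_of_lt h
    rw [if_pos (by omega), if_pos h, Puser_succ hμ hK, growthRatio]
    push_cast
    field_simp
    ring
  · rw [if_neg (by omega), if_neg h, mul_zero]

theorem hasSum_Pblock_succ (hμ : 0 < μ) (hK : 0 < K) (T : ℕ) :
    HasSum (fun m : ℕ ↦ μ / (μ + 7/2) * growthRatio (K * (7/2)) (m : ℝ) * blockTerm μ K T m)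
      (Pblock μ K (T + 1)) := by
  have h := (hasSum_nat_add_iff' 1).2 (summable_blockTerm hμ hK (T + 1)).hasSum
  have h0 : blockTerm μ K (T + 1) 0 = 0 := if_neg (by omega)
  simpa [h0, blockTerm_succ_succ hμ hK, Pblock] using h

end

/-- two-sided strict bound relating consecutive blocking
probabilities: `λ·P_b(K,T) < P_b(K,T+1) < ((T+1)(T+Ka+1)/(T+2)²)·λ·P_b(K,T)`. -/
theorem Pblock_succ_bounds (μ : ℝ) (hμ : 0 < μ) (K : ℕ) (hK : 0 < K) (T : ℕ)
    (hT : (T : ℝ) > 2 / ((K : ℝ) * (7/2) - 2)) :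
    (μ / (μ + 7/2)) * Pblock μ K T < Pblock μ K (T + 1) ∧
      Pblock μ K (T + 1) <
        (((T : ℝ) + 1) * ((T : ℝ) + (K : ℝ) * (7/2) + 1) / ((T : ℝ) + 2) ^ 2) *
          (μ / (μ + 7/2)) * Pblock μ K T := by
  have hA : (7/2 : ℝ) ≤ K * (7/2) := by
    have : (1 : ℝ) ≤ K := by exact_mod_cast hK
    linarith
  set A : ℝ := (K : ℝ) * (7/2)
  set lam := μ / (μ + 7/2)
  have hAT : 2 < (A - 2) * T := by
    rwa [gt_iff_lt, div_lt_iff₀ (by linarith), mul_comm] at hT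
  have hlam : 0 < lam := by positivity
  have hR : ((T : ℝ) + 1) * (T + A + 1) / (T + 2) ^ 2 = growthRatio A (T + 1) := by
    rw [growthRatio]; ring_nf
  have hr_gt_one (n : ℕ) (hn : T + 1 ≤ n) : 1 < growthRatio A n := by
    have : (1 : ℝ) ≤ n := by exact_mod_cast Nat.one_le_of_lt hn
    exact one_lt_growthRatio n.cast_nonneg (by nlinarith)
  have hanti := growthRatio_strictAntiOn T.cast_nonneg hAT
  have hPblock := (summable_blockTerm hμ hK T).hasSum
  have hpos := blockTerm_nonneg hμ hK T
  constructor
  · refine hasSum_mul_lt_hasSum_mul hpos (fun n hn ↦ ?_) (blockTerm_pos hμ hK le_rfl) ?_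
      (hPblock.mul_left lam) (hasSum_Pblock_succ hμ hK T)
    · exact le_mul_of_one_le_right hlam.le (hr_gt_one n (le_of_blockTerm_ne_zero hn.ne')).le
    · exact lt_mul_of_one_lt_right hlam (hr_gt_one _ le_rfl)
  · rw [hR, mul_comm _ lam]
    refine hasSum_mul_lt_hasSum_mul hpos (fun n hn ↦ ?_) (blockTerm_pos hμ hK (n := T + 2)
      (by omega)) ?_ (hasSum_Pblock_succ hμ hK T) (hPblock.mul_left _)
    · have hn' : (T : ℝ) + 1 ≤ n := by exact_mod_cast le_of_blockTerm_ne_zero hn.ne'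
      exact mul_le_mul_of_nonneg_left (hanti.antitoneOn Set.self_mem_Ici hn' hn') hlam.le
    · refine mul_lt_mul_of_pos_left (hanti Set.self_mem_Ici ?_ ?_) hlam
      · rw [Set.mem_Ici]; push_cast; linarith
      · push_cast; linarith
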